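/- arXiv:math/0108088 — 4 statements merged into one kernel-verified Lean document; each statement's English description precedes it below -/
import Mathlib

section
/- Let m ≥ 1 and let u,v ∈ ℂ^m satisfy g(u,u) = g(v,v) = 1 and g(u,v) = 0 (i.e. u,v are orthonormal for the real inner product). Then ω(u,v) ≤ 1, and equality ω(u,v) = 1 holds if and only if v = i·u. Consequently the Kähler form ω is a calibration on ℂ^m whose calibrated tangent 2-planes are exactly the complex lines in ℂ^m. -/
open scoped BigOperators ComplexConjugate

noncomputable section

/-- The Euclidean (real) inner product on `ℂ^m`. -/
def gC {m : ℕ} (u v : Fin m → ℂ) : ℝ := (∑ j, u j * conj (v j)).re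

/-- The Kähler form on `ℂ^m`. -/
def wC {m : ℕ} (u v : Fin m → ℂ) : ℝ := (∑ j, conj (u j) * v j).im

/-- Wirtinger's inequality: if `u,v ∈ ℂ^m` are orthonormal for the real inner
product `g`, then `ω(u,v) ≤ 1`, with equality iff `v = i·u`.  Hence the Kähler
form `ω` is a calibration on `ℂ^m` whose calibrated `2`-planes are exactly the
complex lines. -/
theorem stmt3 (m : ℕ) (hm : 1 ≤ m) (u v : Fin m → ℂ)
    (hu : gC u u = 1) (hv : gC v v = 1) (huv : gC u v = 0) :
    wC u v ≤ 1 ∧ (wC u v = 1 ↔ v = fun j => Complex.I * u j) := by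
  have key : ∑ j, Complex.normSq (v j - Complex.I * u j)
      = gC v v + gC u u - 2 * wC u v := by
    unfold gC wC
    rw [Complex.re_sum, Complex.re_sum, Complex.im_sum, Finset.mul_sum,
      ← Finset.sum_add_distrib, ← Finset.sum_sub_distrib]
    refine Finset.sum_congr rfl fun j _ => ?_
    simp [Complex.normSq_apply, Complex.mul_re, Complex.mul_im, Complex.sub_re,
      Complex.sub_im, Complex.I_re, Complex.I_im]
    ring
  rw [hu, hv] at key
  have hnn : 0 ≤ ∑ j, Complex.normSq (v j - Complex.I * u j) :=
    Finset.sum_nonneg fun j _ => Complex.normSq_nonneg _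
  constructor
  · linarith
  · constructor
    · intro h
      have hz : ∑ j, Complex.normSq (v j - Complex.I * u j) = 0 := by
        rw [key, h]; ring
      funext j
      have := (Finset.sum_eq_zero_iff_of_nonneg
        (fun j _ => Complex.normSq_nonneg (v j - Complex.I * u j))).mp hz j
        (Finset.mem_univ j)
      have := Complex.normSq_eq_zero.mp this
      have : v j = Complex.I * u j := by linear_combination this
      simpa using this
    · intro h
      subst h
      simp at key
      linarith
end
end

section
/- Let f: ℝ^m → ℝ be smooth, and define F: ℝ^m → ℂ^m by F(x) = (x₁ + i ∂f/∂x₁(x), …, x_m + i ∂f/∂x_m(x)), so that the image Γ_f of F is the graph of the 1-form df. Then: (a) for every x ∈ ℝ^m and all i,j, ω(∂F/∂x_i(x), ∂F/∂x_j(x)) = 0, i.e. Γ_f is a Lagrangian submanifold of ℂ^m; and (b) Im Ω(∂F/∂x₁(x),…,∂F/∂x_m(x)) = 0 for every x ∈ ℝ^m if and only if Im det_ℂ(I_m + i Hess f(x)) = 0 for every x ∈ ℝ^m, where Hess f(x) is the m×m matrix (∂²f/∂x_i∂x_j(x)). Hence Γ_f is special Lagrangian if and only if Im det_ℂ(I +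 i Hess f) ≡ 0 on ℝ^m. -/
open scoped BigOperators ComplexConjugate

noncomputable section

/-- The holomorphic volume form `Ω = dz₁∧⋯∧dz_m` on `ℂ^m`. -/
def OmC {m : ℕ} (v : Fin m → (Fin m → ℂ)) : ℂ :=
  Matrix.det (Matrix.of fun i j => v j i)

/-- The Hessian `(∂²f/∂x_i∂x_j)(x)` of `f : ℝ^m → ℝ`. -/
def Hess {m : ℕ} (f : (Fin m → ℝ) → ℝ) (x : Fin m → ℝ) (i j : Fin m) : ℝ :=
  fderiv ℝ (fun y => fderiv ℝ f y (Pi.single j 1)) x (Pi.single i 1)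

section aux
variable {m : ℕ} {f : (Fin m → ℝ) → ℝ}

lemma hg_smooth (hf : ContDiff ℝ (⊤ : ℕ∞) f) (j : Fin m) :
    ContDiff ℝ (⊤ : ℕ∞) (fun y => fderiv ℝ f y (Pi.single j 1)) := by
  have h1 : ContDiff ℝ (⊤ : ℕ∞) (fderiv ℝ f) := hf.fderiv_right (by simp)
  exact (ContinuousLinearMap.apply ℝ ℝ (Pi.single j 1)).contDiff.comp h1

lemma key (hf : ContDiff ℝ (⊤ : ℕ∞) f) (F : (Fin m → ℝ) → (Fin m → ℂ))
    (hF : ∀ x j, F x j = (x j : ℂ) + Complex.I * Complex.ofReal (fderiv ℝ f x (Pi.single j 1)))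
    (x : Fin m → ℝ) (i j : Fin m) :
    fderiv ℝ F x (Pi.single i 1) j
      = (if i = j then (1 : ℂ) else 0) + Complex.I * Complex.ofReal (Hess f x i j) := by
  have hFeq : F = fun x j => (x j : ℂ) + Complex.I *
      Complex.ofReal (fderiv ℝ f x (Pi.single j 1)) := by
    funext x j; exact hF x j
  set L : Fin m → (Fin m → ℝ) →L[ℝ] ℂ := fun j =>
    (Complex.ofRealCLM.comp (ContinuousLinearMap.proj j)) +
      Complex.I • (Complex.ofRealCLM.comp
        (fderiv ℝ (fun y => fderiv ℝ f y (Pi.single j 1)) x)) with hL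
  have hFD : HasFDerivAt F (ContinuousLinearMap.pi L) x := by
    rw [hFeq]
    apply hasFDerivAt_pi.2
    intro j
    have h1 := (Complex.ofRealCLM.comp (ContinuousLinearMap.proj j)
      : (Fin m → ℝ) →L[ℝ] ℂ).hasFDerivAt (x := x)
    have h2 : HasFDerivAt (fun y => Complex.ofReal (fderiv ℝ f y (Pi.single j 1)))
        (Complex.ofRealCLM.comp
          (fderiv ℝ (fun y => fderiv ℝ f y (Pi.single j 1)) x)) x :=
      Complex.ofRealCLM.hasFDerivAt.comp x
        ((hg_smooth hf j).differentiable (by simp) x).hasFDerivAt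
    exact h1.add (h2.const_mul Complex.I)
  rw [hFD.fderiv]
  simp only [ContinuousLinearMap.pi_apply, hL, ContinuousLinearMap.add_apply,
    ContinuousLinearMap.smul_apply, ContinuousLinearMap.comp_apply,
    ContinuousLinearMap.proj_apply, Complex.ofRealCLM_apply]
  rw [Hess]
  simp only [Pi.single_apply, smul_eq_mul, eq_comm]
  split <;> simp

lemma hess_symm (hf : ContDiff ℝ (⊤ : ℕ∞) f) (x : Fin m → ℝ) (i j : Fin m) :
    Hess f x i j = Hess f x j i := by
  have h2 : ∀ w : Fin m → ℝ, fderiv ℝ (fun y => fderiv ℝ f y w) x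
      = (ContinuousLinearMap.apply ℝ ℝ w).comp (fderiv ℝ (fderiv ℝ f) x) := by
    intro w
    have hd : DifferentiableAt ℝ (fderiv ℝ f) x :=
      ((hf.fderiv_right (m := (⊤ : ℕ∞)) (by simp)).differentiable (by simp)) x
    exact (((ContinuousLinearMap.apply ℝ ℝ w).hasFDerivAt).comp x hd.hasFDerivAt).fderiv
  have hsym := second_derivative_symmetric (f := f) (f' := fderiv ℝ f)
    (f'' := fderiv ℝ (fderiv ℝ f) x)
    (fun y => ((hf.differentiable (by simp)) y).hasFDerivAt)
    (((hf.fderiv_right (m := (⊤ : ℕ∞)) (by simp)).differentiable (by simp) x).hasFDerivAt)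
    (Pi.single j 1) (Pi.single i 1)
  simp only [Hess, h2, ContinuousLinearMap.comp_apply, ContinuousLinearMap.apply_apply]
  exact hsym.symm

end aux

/-- Let `f : ℝ^m → ℝ` be smooth and `F(x) = (x₁ + i ∂f/∂x₁(x), …, x_m + i ∂f/∂x_m(x))`,
so the image of `F` is the graph `Γ_f` of the `1`-form `df`.  Then (a) `ω` vanishes
on all pairs of partial derivatives of `F`, i.e. `Γ_f` is Lagrangian; and (b)
`Im Ω` vanishes on the tangent spaces of `Γ_f` everywhere iff
`Im det_ℂ(I + i Hess f) ≡ 0` on `ℝ^m`.  Hence `Γ_f` is special Lagrangian iff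
`Im det_ℂ(I + i Hess f) ≡ 0`. -/
theorem stmt6 (m : ℕ) (hm : 1 ≤ m) (f : (Fin m → ℝ) → ℝ) (hf : ContDiff ℝ (⊤ : ℕ∞) f)
    (F : (Fin m → ℝ) → (Fin m → ℂ))
    (hF : ∀ x j, F x j = (x j : ℂ) + Complex.I * Complex.ofReal (fderiv ℝ f x (Pi.single j 1))) :
    (∀ (x : Fin m → ℝ) (i j : Fin m),
      wC (fderiv ℝ F x (Pi.single i 1)) (fderiv ℝ F x (Pi.single j 1)) = 0) ∧
    ((∀ x : Fin m → ℝ, (OmC fun j => fderiv ℝ F x (Pi.single j 1)).im = 0) ↔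
      (∀ x : Fin m → ℝ,
        (Matrix.det (Matrix.of fun i j : Fin m =>
          (if i = j then (1 : ℂ) else 0) + Complex.I * Complex.ofReal (Hess f x i j))).im
          = 0)) := by
  constructor
  · intro x p q
    rw [wC]
    have hterm : ∀ j, (conj (fderiv ℝ F x (Pi.single p 1) j) * fderiv ℝ F x (Pi.single q 1) j).im
        = (if p = j then Hess f x q j else 0) - (if q = j then Hess f x p j else 0) := by
      intro j
      rw [key hf F hF, key hf F hF]
      by_cases hp : p = j <;> by_cases hq : q = j <;>
        simp [hp, hq, Complex.ext_iff, Complex.add_im, Complex.mul_im]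
    rw [Complex.im_sum]
    simp only [hterm]
    rw [Finset.sum_sub_distrib, Finset.sum_ite_eq, Finset.sum_ite_eq]
    simp [hess_symm hf x q p]
  · have hmat : ∀ x, (Matrix.of fun i j => fderiv ℝ F x (Pi.single j 1) i)
        = Matrix.of fun i j : Fin m =>
          (if i = j then (1 : ℂ) else 0) + Complex.I * Complex.ofReal (Hess f x i j) := by
      intro x
      ext i j
      simp only [Matrix.of_apply]
      rw [key hf F hF, hess_symm hf x j i]
      simp [eq_comm]
    constructor <;> intro h x <;> have := h x
    · rwa [OmC, hmat x] at this
    · rw [OmC, hmat x]; exact this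
end
end

section
/- Let t > 0 and define φ_t: S¹ × ℂ → ℂ³ by φ_t(s, z) = ((|z|² + t²)^{1/2} s, z, conj(s)·conj(z)), where S¹ = {s ∈ ℂ : |s| = 1}. Then φ_t is injective, and its image equals the set L_t = {(z₁,z₂,z₃) ∈ ℂ³ : |z₁|² − t² = |z₂|² = |z₃|², Im(z₁z₂z₃) = 0, Re(z₁z₂z₃) ≥ 0}. -/
open scoped BigOperators ComplexConjugate

noncomputable section

/-- The map `φ_t(s,z) = ((|z|²+t²)^{1/2} s, z, conj(s) conj(z))` on `S¹ × ℂ`. -/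
def phi9 (t : ℝ) (p : ℂ × ℂ) : Fin 3 → ℂ :=
  ![(Real.sqrt (Complex.normSq p.2 + t ^ 2) : ℂ) * p.1, p.2, conj p.1 * conj p.2]

/-- For `t > 0`, `φ_t` is injective on `S¹ × ℂ` and its image is the nonsingular
special Lagrangian `3`-fold
`L_t = {z ∈ ℂ³ : |z₁|² − t² = |z₂|² = |z₃|², Im(z₁z₂z₃) = 0, Re(z₁z₂z₃) ≥ 0}`. -/
theorem stmt9 (t : ℝ) (ht : 0 < t) :
    Set.InjOn (phi9 t) {p : ℂ × ℂ | ‖p.1‖ = 1} ∧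
    phi9 t '' {p : ℂ × ℂ | ‖p.1‖ = 1} =
      {z : Fin 3 → ℂ | Complex.normSq (z 0) - t ^ 2 = Complex.normSq (z 1) ∧
        Complex.normSq (z 1) = Complex.normSq (z 2) ∧
        (z 0 * z 1 * z 2).im = 0 ∧ 0 ≤ (z 0 * z 1 * z 2).re} := by
  have hsq : ∀ w : ℂ, 0 < Complex.normSq w + t ^ 2 := fun w =>
    add_pos_of_nonneg_of_pos (Complex.normSq_nonneg w) (pow_pos ht 2)
  constructor
  · intro p hp q hq h
    have h1 : p.2 = q.2 := congrFun h 1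
    have h0 := congrFun h 0
    simp only [phi9, Matrix.cons_val_zero] at h0
    rw [h1] at h0
    have hc : ((Real.sqrt (Complex.normSq q.2 + t ^ 2) : ℝ) : ℂ) ≠ 0 := by
      exact_mod_cast (Real.sqrt_pos.mpr (hsq q.2)).ne'
    exact Prod.ext (mul_left_cancel₀ hc h0) h1
  · ext z
    simp only [Set.mem_image, Set.mem_setOf_eq]
    constructor
    · rintro ⟨⟨s, w⟩, hs, rfl⟩
      simp only [Set.mem_setOf_eq] at hs
      set c := Real.sqrt (Complex.normSq w + t ^ 2) with hcdef
      have hc2 : c ^ 2 = Complex.normSq w + t ^ 2 := Real.sq_sqrt (hsq w).le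
      have hns : Complex.normSq s = 1 := by
        rw [← Complex.sq_norm, hs]; norm_num
      have hprod : (phi9 t (s, w)) 0 * (phi9 t (s, w)) 1 * (phi9 t (s, w)) 2
          = ((c * Complex.normSq w : ℝ) : ℂ) := by
        show ((c : ℂ) * s) * w * (conj s * conj w) = _
        have : ((c : ℂ) * s) * w * (conj s * conj w)
            = (c : ℂ) * (s * conj s) * (w * conj w) := by ring
        rw [this, Complex.mul_conj, Complex.mul_conj, hns]
        push_cast; ring
      refine ⟨?_, ?_, ?_, ?_⟩
      · show Complex.normSq ((c : ℂ) * s) - t ^ 2 = Complex.normSq w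
        rw [Complex.normSq_mul, Complex.normSq_ofReal, hns, ← sq, hc2]; ring
      · show Complex.normSq w = Complex.normSq (conj s * conj w)
        rw [Complex.normSq_mul, Complex.normSq_conj, Complex.normSq_conj, hns, one_mul]
      · rw [hprod]; simp
      · rw [hprod]
        simp only [Complex.ofReal_re]
        exact mul_nonneg (Real.sqrt_nonneg _) (Complex.normSq_nonneg _)
    · rintro ⟨h1, h2, h3, h4⟩
      set c := Real.sqrt (Complex.normSq (z 1) + t ^ 2) with hcdef
      have hcpos : 0 < c := Real.sqrt_pos.mpr (hsq (z 1))
      have hc2 : c ^ 2 = Complex.normSq (z 1) + t ^ 2 := Real.sq_sqrt (hsq (z 1)).le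
      have hcC : ((c : ℝ) : ℂ) ≠ 0 := by exact_mod_cast hcpos.ne'
      have hz0n : Complex.normSq (z 0) = c ^ 2 := by rw [hc2]; linarith
      have habs0 : ‖z 0‖ = c := by
        rw [Complex.norm_def, hz0n, Real.sqrt_sq hcpos.le]
      have hz0ne : z 0 ≠ 0 := by
        intro h
        rw [h, norm_zero] at habs0; exact hcpos.ne habs0
      refine ⟨(z 0 / (c : ℂ), z 1), ?_, ?_⟩
      · show ‖z 0 / (c : ℂ)‖ = 1
        rw [norm_div, habs0, Complex.norm_real, Real.norm_eq_abs, abs_of_pos hcpos, div_self hcpos.ne']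
      · -- show phi9 t (z 0 / c, z 1) = z
        have hPreal : z 0 * z 1 * z 2 = ((c * Complex.normSq (z 1) : ℝ) : ℂ) := by
          have hP : z 0 * z 1 * z 2 = (((z 0 * z 1 * z 2).re : ℝ) : ℂ) := by
            apply Complex.ext <;> simp [h3]
          have habsP : ‖z 0 * z 1 * z 2‖ = c * Complex.normSq (z 1) := by
            rw [norm_mul, norm_mul, habs0]
            have h1' : ‖z 1‖ = Real.sqrt (Complex.normSq (z 1)) :=
              Complex.norm_def _
            have h2' : ‖z 2‖ = Real.sqrt (Complex.normSq (z 1)) := by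
              rw [Complex.norm_def, h2]
            rw [h1', h2', mul_assoc, Real.mul_self_sqrt (Complex.normSq_nonneg _)]
          have : (z 0 * z 1 * z 2).re = c * Complex.normSq (z 1) := by
            have habs' : ‖z 0 * z 1 * z 2‖ = |(z 0 * z 1 * z 2).re| := by
              conv_lhs => rw [hP]
              rw [Complex.norm_real, Real.norm_eq_abs]
            rw [habsP, abs_of_nonneg h4] at habs'
            linarith
          rw [hP, this]
        funext i
        fin_cases i
        · show ((Real.sqrt (Complex.normSq (z 1) + t ^ 2) : ℝ) : ℂ) * (z 0 / (c : ℂ)) = z 0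
          rw [← hcdef, mul_div_assoc', mul_comm, mul_div_assoc, div_self hcC, mul_one]
        · rfl
        · show conj (z 0 / (c : ℂ)) * conj (z 1) = z 2
          by_cases hz1 : z 1 = 0
          · have : Complex.normSq (z 2) = 0 := by rw [← h2, hz1]; simp
            have hz2 : z 2 = 0 := by
              rwa [Complex.normSq_eq_zero] at this
            rw [hz1, hz2, map_zero, mul_zero]
          · have hz01 : z 0 * z 1 ≠ 0 := mul_ne_zero hz0ne hz1
            apply mul_right_cancel₀ hz01
            have lhs : conj (z 0 / (c : ℂ)) * conj (z 1) * (z 0 * z 1)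
                = ((Complex.normSq (z 0) : ℝ) : ℂ) * ((Complex.normSq (z 1) : ℝ) : ℂ) / (c : ℂ) := by
              rw [map_div₀, Complex.conj_ofReal]
              field_simp
              rw [← Complex.mul_conj (z 0), ← Complex.mul_conj (z 1)]
              ring
            rw [lhs]
            have rhs : z 2 * (z 0 * z 1) = ((c * Complex.normSq (z 1) : ℝ) : ℂ) := by
              rw [← hPreal]; ring
            rw [rhs, hz0n]
            push_cast
            field_simp
end
end

section
/- Let S ⊆ ℝ² be a bounded, connected open set, and let a ∈ ℝ with a ≠ 0. Suppose f₁, f₂: closure(S) → ℝ are continuous on the closure of S, twice continuously differentiable on S, and satisfy P(f₁) = 0 and P(f₂) = 0 on S, where P(f) = ((∂f/∂x)² + y² + a²)^{−1/2} ∂²f/∂x² + 2 ∂²f/∂y², and f₁ = f₂ on the boundary ∂S. Then f₁ = f₂ on all of closure(S). (This is the uniqueness assertion of the Dirichlet problem of Theorem 8.3 for the equation P(f) = 0 with a ≠ 0.) -/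
open scoped BigOperators Topology

noncomputable section

/-- The quasilinear operator
`P(f) = ((∂f/∂x)² + y² + a²)^{−1/2} ∂²f/∂x² + 2 ∂²f/∂y²`. -/
def P16 (a : ℝ) (f : ℝ × ℝ → ℝ) (p : ℝ × ℝ) : ℝ :=
  (Real.sqrt ((fderiv ℝ f p (1, 0)) ^ 2 + p.2 ^ 2 + a ^ 2))⁻¹ *
      fderiv ℝ (fun q => fderiv ℝ f q (1, 0)) p (1, 0) +
    2 * fderiv ℝ (fun q => fderiv ℝ f q (0, 1)) p (0, 1)

lemma sd_test {u u' : ℝ → ℝ} {m : ℝ}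
    (hu : ∀ᶠ t in 𝓝 (0:ℝ), HasDerivAt u (u' t) t)
    (hu' : HasDerivAt u' m 0) (hmax : IsLocalMax u 0) : m ≤ 0 := by
  by_contra hm
  push_neg at hm
  have h0 : u' 0 = 0 := hmax.hasDerivAt_eq_zero hu.self_of_nhds
  have hslope : Filter.Tendsto (slope u' 0) (𝓝[≠] 0) (𝓝 m) :=
    hasDerivAt_iff_tendsto_slope.mp hu'
  have hpos : ∀ᶠ t in 𝓝[>] (0:ℝ), 0 < u' t := by
    have h1 : ∀ᶠ t in 𝓝[>] (0:ℝ), 0 < slope u' 0 t :=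
      (hslope.mono_left (nhdsWithin_mono _ fun t ht => ne_of_gt ht)).eventually
        (eventually_gt_nhds hm)
    filter_upwards [h1, self_mem_nhdsWithin] with t ht ht0
    rw [show slope u' 0 t = t⁻¹ * u' t by simp [slope, h0], inv_mul_eq_div] at ht
    have ht0' : (0:ℝ) < t := ht0
    have := mul_pos ht ht0'
    rwa [div_mul_cancel₀ _ (ne_of_gt ht0')] at this
  have hle : ∀ᶠ t in 𝓝 (0:ℝ), u t ≤ u 0 := hmax
  have hall : ∀ᶠ t in 𝓝 (0:ℝ), (HasDerivAt u (u' t) t ∧ u t ≤ u 0) := hu.and hle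
  rw [Metric.eventually_nhds_iff] at hall
  obtain ⟨δ₁, hδ₁, H1⟩ := hall
  rw [eventually_nhdsWithin_iff, Metric.eventually_nhds_iff] at hpos
  obtain ⟨δ₂, hδ₂, H2⟩ := hpos
  set b := min δ₁ δ₂ / 2 with hb
  have hb0 : 0 < b := by positivity
  have hbδ1 : ∀ t ∈ Set.Icc (0:ℝ) b, HasDerivAt u (u' t) t ∧ u t ≤ u 0 := by
    intro t ht
    apply H1
    rw [Real.dist_eq, sub_zero, abs_of_nonneg ht.1]
    calc t ≤ b := ht.2
    _ < δ₁ := by have := min_le_left δ₁ δ₂; simp only [hb]; linarith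
  obtain ⟨c, hc, hceq⟩ := exists_hasDerivAt_eq_slope u u' hb0
    (fun t ht => ((hbδ1 t ht).1).continuousAt.continuousWithinAt)
    (fun t ht => (hbδ1 t (Set.mem_Icc_of_Ioo ht)).1)
  have hcpos : 0 < u' c := by
    apply H2
    · rw [Real.dist_eq, sub_zero, abs_of_pos hc.1]
      calc c < b := hc.2
      _ < δ₂ := by have := min_le_right δ₁ δ₂; simp only [hb]; linarith
    · exact hc.1
  rw [hceq] at hcpos
  have hub : u b ≤ u 0 := (hbδ1 b (Set.right_mem_Icc.mpr hb0.le)).2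
  have : (u b - u 0) / (b - 0) ≤ 0 := div_nonpos_of_nonpos_of_nonneg (by linarith) (by linarith)
  linarith

lemma diffA {S : Set (ℝ×ℝ)} (hS : IsOpen S) {f : ℝ×ℝ → ℝ}
    (hd : ContDiffOn ℝ 2 f S) {p : ℝ×ℝ} (hp : p ∈ S) (e : ℝ×ℝ) :
    DifferentiableAt ℝ (fun q => fderiv ℝ f q e) p := by
  have h1 : ContDiffAt ℝ 2 f p := hd.contDiffAt (hS.mem_nhds hp)
  have h2 : ContDiffAt ℝ 1 (fderiv ℝ f) p := h1.fderiv_right (by norm_num)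
  have h3 : DifferentiableAt ℝ (fderiv ℝ f) p := h2.differentiableAt one_ne_zero
  exact (ContinuousLinearMap.apply ℝ ℝ e).differentiableAt.comp p h3

lemma core {S : Set (ℝ×ℝ)} (hS : IsOpen S) {a : ℝ} (ha : a ≠ 0)
    {f₁ f₂ : ℝ×ℝ → ℝ} (hd₁ : ContDiffOn ℝ 2 f₁ S) (hd₂ : ContDiffOn ℝ 2 f₂ S)
    (hP₁ : ∀ p ∈ S, P16 a f₁ p = 0) (hP₂ : ∀ p ∈ S, P16 a f₂ p = 0)
    {ε : ℝ} (hε : 0 < ε) {p : ℝ×ℝ} (hp : p ∈ S)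
    (hmax : IsMaxOn (fun q => (f₁ q - f₂ q) + ε * q.2^2) (closure S) p) : False := by
  have main : ∀ e : ℝ × ℝ,
      (fderiv ℝ f₁ p e - fderiv ℝ f₂ p e + ε*(2*p.2*e.2) = 0) ∧
      (fderiv ℝ (fun q => fderiv ℝ f₁ q e) p e - fderiv ℝ (fun q => fderiv ℝ f₂ q e) p e
        + ε*(2*e.2*e.2) ≤ 0) := by
    intro e
    have hγ : ∀ t : ℝ, HasDerivAt (fun s : ℝ => p + s • e) e t := fun t => by
      simpa using ((hasDerivAt_id t).smul_const e).const_add p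
    have hγ2 : ∀ t : ℝ, (p + t • e).2 = p.2 + t * e.2 := fun t => by
      simp [Prod.snd_add, smul_eq_mul]
    have e0 : p + (0:ℝ) • e = p := by simp
    have hcont : Continuous fun t : ℝ => p + t • e := by continuity
    have hev : ∀ᶠ t in 𝓝 (0:ℝ), p + t • e ∈ S := by
      have := hcont.continuousAt (x := (0:ℝ))
      exact this.preimage_mem_nhds (by rw [e0]; exact hS.mem_nhds hp)
    set u : ℝ → ℝ := fun t => (f₁ (p + t • e) - f₂ (p + t • e)) + ε * (p.2 + t * e.2)^2 with hu_def
    set u' : ℝ → ℝ := fun t =>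
      (fderiv ℝ f₁ (p + t • e) e - fderiv ℝ f₂ (p + t • e) e) + ε * (2*(p.2 + t*e.2)*e.2)
      with hu'_def
    have hdf : ∀ {f : ℝ×ℝ → ℝ}, ContDiffOn ℝ 2 f S → ∀ t : ℝ, p + t • e ∈ S →
        HasDerivAt (fun s : ℝ => f (p + s • e)) (fderiv ℝ f (p + t • e) e) t := by
      intro f hd t ht
      have hdiff : DifferentiableAt ℝ f (p + t • e) :=
        (hd.differentiableOn two_ne_zero).differentiableAt (hS.mem_nhds ht)
      exact hdiff.hasFDerivAt.comp_hasDerivAt t (hγ t)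
    have hu : ∀ᶠ t in 𝓝 (0:ℝ), HasDerivAt u (u' t) t := by
      filter_upwards [hev] with t ht
      have h1 := hdf hd₁ t ht
      have h2 := hdf hd₂ t ht
      have h3 : HasDerivAt (fun s : ℝ => ε * (p.2 + s*e.2)^2) (ε*(2*(p.2+t*e.2)*e.2)) t := by
        have hb : HasDerivAt (fun s : ℝ => p.2 + s*e.2) e.2 t :=
          (hasDerivAt_mul_const e.2).const_add p.2
        have := (hb.pow 2).const_mul ε
        exact this.congr_deriv (by push_cast; ring)
      exact (h1.sub h2).add h3
    have hA : ∀ {f : ℝ×ℝ → ℝ}, ContDiffOn ℝ 2 f S →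
        HasDerivAt (fun t : ℝ => fderiv ℝ f (p + t • e) e)
          (fderiv ℝ (fun q => fderiv ℝ f q e) p e) 0 := by
      intro f hd
      have hA0 : DifferentiableAt ℝ (fun q => fderiv ℝ f q e) (p + (0:ℝ) • e) := by
        rw [e0]; exact diffA hS hd hp e
      have := hA0.hasFDerivAt.comp_hasDerivAt 0 (hγ 0)
      rw [e0] at this
      exact this
    have h3' : HasDerivAt (fun s : ℝ => ε*(2*(p.2+s*e.2)*e.2)) (ε*(2*e.2*e.2)) 0 := by
      have hb : HasDerivAt (fun s : ℝ => p.2 + s*e.2) e.2 0 :=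
        (hasDerivAt_mul_const e.2).const_add p.2
      have := ((hb.const_mul 2).mul_const e.2).const_mul ε
      convert this using 1
    have hu'0 : HasDerivAt u'
        ((fderiv ℝ (fun q => fderiv ℝ f₁ q e) p e - fderiv ℝ (fun q => fderiv ℝ f₂ q e) p e)
          + ε*(2*e.2*e.2)) 0 :=
      ((hA hd₁).sub (hA hd₂)).add h3'
    have hloc : IsLocalMax u 0 := by
      filter_upwards [hev] with t ht
      have h5 := hmax (subset_closure ht)
      simp only [hu_def]
      calc (f₁ (p + t • e) - f₂ (p + t • e)) + ε * (p.2 + t * e.2)^2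
          = (f₁ (p + t • e) - f₂ (p + t • e)) + ε * ((p + t • e).2)^2 := by rw [hγ2 t]
        _ ≤ (f₁ p - f₂ p) + ε * p.2^2 := h5
        _ = (f₁ (p + (0:ℝ) • e) - f₂ (p + (0:ℝ) • e)) + ε * (p.2 + 0 * e.2)^2 := by
            rw [e0]; ring_nf
    constructor
    · have h6 : u' 0 = 0 := hloc.hasDerivAt_eq_zero hu.self_of_nhds
      simp only [hu'_def, e0, zero_mul, add_zero] at h6
      linarith [h6]
    · exact sd_test hu hu'0 hloc

  obtain ⟨hx1, hxx⟩ := main ((1:ℝ), (0:ℝ))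
  obtain ⟨-, hyy⟩ := main ((0:ℝ), (1:ℝ))
  norm_num at hx1 hxx hyy
  have h1 := hP₁ p hp
  have h2 := hP₂ p hp
  unfold P16 at h1 h2
  have hfx : fderiv ℝ f₂ p ((1:ℝ),(0:ℝ)) = fderiv ℝ f₁ p ((1:ℝ),(0:ℝ)) := by linarith
  rw [hfx] at h2
  have ha2 : (0:ℝ) < a^2 := pow_two_pos_of_ne_zero ha
  have hcpos : (0:ℝ) < (Real.sqrt ((fderiv ℝ f₁ p ((1:ℝ),(0:ℝ)))^2 + p.2^2 + a^2))⁻¹ :=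
    inv_pos.mpr (Real.sqrt_pos.mpr (by nlinarith [sq_nonneg (fderiv ℝ f₁ p ((1:ℝ),(0:ℝ))), sq_nonneg p.2]))
  nlinarith [h1, h2, hyy, hε, mul_le_mul_of_nonneg_left hxx hcpos.le]

lemma aux_le {S : Set (ℝ×ℝ)} (hS : IsOpen S) (hb : Bornology.IsBounded S)
    {a : ℝ} (ha : a ≠ 0) {f₁ f₂ : ℝ×ℝ → ℝ}
    (hc₁ : ContinuousOn f₁ (closure S)) (hc₂ : ContinuousOn f₂ (closure S))
    (hd₁ : ContDiffOn ℝ 2 f₁ S) (hd₂ : ContDiffOn ℝ 2 f₂ S)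
    (hP₁ : ∀ p ∈ S, P16 a f₁ p = 0) (hP₂ : ∀ p ∈ S, P16 a f₂ p = 0)
    (hbd : ∀ p ∈ frontier S, f₁ p = f₂ p) :
    ∀ p ∈ closure S, f₁ p ≤ f₂ p := by
  intro q hq
  obtain ⟨r, hr⟩ := (hb.closure).subset_closedBall 0
  have hbound : ∀ x ∈ closure S, x.2^2 ≤ r^2 := by
    intro x hx
    have h1 : dist x 0 ≤ r := hr hx
    rw [dist_zero_right] at h1
    have h2 : |x.2| ≤ r := le_trans (by simpa using norm_snd_le x) h1
    have h3 := abs_le.mp h2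
    nlinarith [h3.1, h3.2]
  have hr2 : (0:ℝ) ≤ r^2 := le_trans (sq_nonneg q.2) (hbound q hq)
  have key : ∀ ε : ℝ, 0 < ε → f₁ q - f₂ q ≤ ε * r^2 := by
    intro ε hε
    have hhc : ContinuousOn (fun x : ℝ×ℝ => (f₁ x - f₂ x) + ε * x.2^2) (closure S) :=
      (hc₁.sub hc₂).add (Continuous.continuousOn (by continuity))
    have hcpt : IsCompact (closure S) := hb.isCompact_closure
    obtain ⟨p, hpcl, hpmax⟩ := hcpt.exists_isMaxOn ⟨q, hq⟩ hhc
    have hpS : p ∉ S := fun hpS => core hS ha hd₁ hd₂ hP₁ hP₂ hε hpS hpmax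
    have hpf : p ∈ frontier S := by
      rw [hS.frontier_eq]; exact ⟨hpcl, hpS⟩
    have hg0 : f₁ p = f₂ p := hbd p hpf
    have h5 : (f₁ q - f₂ q) + ε * q.2^2 ≤ (f₁ p - f₂ p) + ε * p.2^2 :=
      isMaxOn_iff.mp hpmax q hq
    have hp2 : p.2^2 ≤ r^2 := hbound p hpcl
    have hq2 : (0:ℝ) ≤ ε * q.2^2 := by positivity
    nlinarith [mul_le_mul_of_nonneg_left hp2 hε.le]
  by_contra hlt
  push_neg at hlt
  have h0 : 0 < f₁ q - f₂ q := by linarith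
  have hden : (0:ℝ) < 2*(r^2+1) := by positivity
  have h2 := key ((f₁ q - f₂ q)/(2*(r^2+1))) (by positivity)
  rw [div_mul_eq_mul_div, le_div_iff₀ hden] at h2
  nlinarith [mul_nonneg h0.le hr2]

/-- Uniqueness in the Dirichlet problem for `P(f) = 0` with `a ≠ 0` (Theorem 8.3):
if `S ⊆ ℝ²` is bounded, connected and open, `f₁, f₂` are continuous on `closure S`,
`C²` on `S`, satisfy `P(f₁) = P(f₂) = 0` on `S` and agree on `∂S`, then `f₁ = f₂`
on `closure S`. -/
theorem stmt16 (S : Set (ℝ × ℝ)) (hS : IsOpen S) (hb : Bornology.IsBounded S)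
    (hconn : IsConnected S) (a : ℝ) (ha : a ≠ 0) (f₁ f₂ : ℝ × ℝ → ℝ)
    (hc₁ : ContinuousOn f₁ (closure S)) (hc₂ : ContinuousOn f₂ (closure S))
    (hd₁ : ContDiffOn ℝ 2 f₁ S) (hd₂ : ContDiffOn ℝ 2 f₂ S)
    (hP₁ : ∀ p ∈ S, P16 a f₁ p = 0) (hP₂ : ∀ p ∈ S, P16 a f₂ p = 0)
    (hbd : ∀ p ∈ frontier S, f₁ p = f₂ p) :
    ∀ p ∈ closure S, f₁ p = f₂ p := by
  intro p hp
  have h1 := aux_le hS hb ha hc₁ hc₂ hd₁ hd₂ hP₁ hP₂ hbd p hp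
  have h2 := aux_le hS hb ha hc₂ hc₁ hd₂ hd₁ hP₂ hP₁ (fun x hx => (hbd x hx).symm) p hp
  linarith
end
end
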